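/- For every nonzero ordinal θ, if a subset S of C^ω belongs to K_θ, then there exist a closed set F ⊆ C^ω and a set L ∈ Λ_θ such that S = F ∪ L. -/

import Mathlib

open Set Topology

noncomputable section

def seqTop (C : Type) : TopologicalSpace (ℕ → C) :=
  @Pi.topologicalSpace ℕ (fun _ => C) (fun _ => ⊥)

def pref {C : Type} (ρ : ℕ → C) (n : ℕ) : List C :=
  (List.range n).map ρ

def OrdEven (θ : Ordinal) : Prop :=
  ∃ (lam : Ordinal) (k : ℕ), (lam = 0 ∨ Order.IsSuccLimit lam) ∧ θ = lam + 2 * (k : Ordinal)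

def HDiffSet {C : Type} (θ : Ordinal) (O : Ordinal → Set (ℕ → C)) : Set (ℕ → C) :=
  {ρ | (∃ η < θ, ρ ∈ O η) ∧ (OrdEven (sInf {η | η < θ ∧ ρ ∈ O η}) ↔ ¬ OrdEven θ)}

def Dclass (C : Type) (θ : Ordinal) : Set (Set (ℕ → C)) :=
  {S | ∃ O : Ordinal → Set (ℕ → C),
      (∀ η < θ, IsOpen[seqTop C] (O η)) ∧
      (∀ η₁ η₂, η₁ ≤ η₂ → η₂ < θ → O η₁ ⊆ O η₂) ∧
      S = HDiffSet θ O}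

def FineLambda (C : Type) : Ordinal → Set (Set (ℕ → C))
  | θ =>
    if θ = 1 then {S | IsOpen[seqTop C] S}
    else if 1 < θ then
      {S | ∃ (I : Type) (T O : I → Set (ℕ → C)) (η : I → {x : Ordinal // x < θ}),
        (∀ i, IsOpen[seqTop C] (O i)) ∧ (Pairwise fun i j => Disjoint (O i) (O j)) ∧
        (∀ i, T i ⊆ O i) ∧ S = ⋃ i, T i ∧
        ∀ i, T i ∈ FineLambda C (η i) ∨ (T i)ᶜ ∈ FineLambda C (η i)}
    else ∅
termination_by θ => θ
decreasing_by all_goals exact (η i).2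

def FineK (C : Type) (θ : Ordinal) : Set (Set (ℕ → C)) :=
  {S | Sᶜ ∈ FineLambda C θ}

open Function

/-! If `Sᶜ = ⩁ᵢ Tᵢ` with `Tᵢ ⊆ Oᵢ`, then `S = (⋃ᵢ Oᵢ)ᶜ ∪ ⋃ᵢ (Oᵢ \ Tᵢ)`: the first set is closed and
the second is again an open union. Its pieces `Oᵢ \ Tᵢ = Tᵢᶜ ∩ Oᵢ` lie in `Λ_η ∪ K_η` as soon as the
`Oᵢ` are clopen, and the separating sets can always be chosen clopen: every open subset of `C^ω`
is a disjoint union of cylinders, and, by induction on `η`, each `Λ_η` is closed under union and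
intersection with a clopen set. -/

attribute [local instance] seqTop

namespace PiNat

variable {E : ℕ → Type*}

def maximalCylinders (U : Set (∀ n, E n)) : Set (Set (∀ n, E n)) :=
  {s | ∃ x n, s = cylinder x n ∧ s ⊆ U ∧ ∀ k < n, ¬cylinder x k ⊆ U}

theorem pairwiseDisjoint_maximalCylinders (U : Set (∀ n, E n)) :
    (maximalCylinders U).PairwiseDisjoint id := by
  suffices key : ∀ x y m n, cylinder x m ⊆ U → (∀ k < n, ¬cylinder y k ⊆ U) → m ≤ n →
      (cylinder x m ∩ cylinder y n).Nonempty → cylinder x m = cylinder y n by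
    rintro _ ⟨x, m, rfl, hxU, hxmin⟩ _ ⟨y, n, rfl, hyU, hymin⟩ hne
    refine not_not.1 fun h => hne ?_
    rw [Set.not_disjoint_iff_nonempty_inter] at h
    rcases le_total m n with hmn | hnm
    · exact key x y m n hxU hymin hmn h
    · exact (key y x n m hyU hxmin hnm (inter_comm _ _ ▸ h)).symm
  rintro x y m n hxU hymin hmn ⟨z, hzx, hzy⟩
  have hx : cylinder x m = cylinder z m := (mem_cylinder_iff_eq.1 hzx).symm
  have hy : cylinder y n = cylinder z n := (mem_cylinder_iff_eq.1 hzy).symm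
  obtain rfl : m = n := by
    refine hmn.antisymm (not_lt.1 fun hlt => hymin m hlt ?_)
    rwa [(mem_cylinder_iff_eq.1 (cylinder_anti y hmn hzy)).symm, ← hx]
  rw [hx, hy]

variable [∀ n, TopologicalSpace (E n)] [∀ n, DiscreteTopology (E n)]

theorem isClopen_cylinder (x : ∀ n, E n) (n : ℕ) : IsClopen (cylinder x n) := by
  refine ⟨?_, isOpen_cylinder E x n⟩
  rw [cylinder_eq_pi]
  exact isClosed_set_pi fun i _ => isClosed_discrete _

theorem sUnion_maximalCylinders {U : Set (∀ n, E n)} (hU : IsOpen U) :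
    ⋃₀ maximalCylinders U = U := by
  refine Subset.antisymm (sUnion_subset fun s ⟨_, _, _, hsU, _⟩ => hsU) fun x hx => ?_
  have hex : ∃ n, cylinder x n ⊆ U := by
    obtain ⟨_, ⟨y, n, rfl⟩, hxy, hyU⟩ :=
      (isTopologicalBasis_cylinders E).exists_subset_of_mem_open hx hU
    exact ⟨n, (mem_cylinder_iff_eq.1 hxy) ▸ hyU⟩
  classical
  exact ⟨_, ⟨x, _, rfl, Nat.find_spec hex, fun k hk => Nat.find_min hex hk⟩, self_mem_cylinder x _⟩

theorem exists_isClopen_partition {U : Set (∀ n, E n)} (hU : IsOpen U) :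
    ∃ P : Set (Set (∀ n, E n)), (∀ s ∈ P, IsClopen s) ∧ P.PairwiseDisjoint id ∧ ⋃₀ P = U :=
  ⟨maximalCylinders U, fun _ ⟨x, n, hs, _⟩ => hs ▸ isClopen_cylinder x n,
    pairwiseDisjoint_maximalCylinders U, sUnion_maximalCylinders hU⟩

end PiNat

theorem Pairwise.disjoint_sigma {α ι : Type*} {κ : ι → Type*} {O : ι → Set α}
    {V : ∀ i, κ i → Set α} (hO : Pairwise (Disjoint on O)) (hV : ∀ i, Pairwise (Disjoint on V i))
    (hVO : ∀ i k, V i k ⊆ O i) : Pairwise (Disjoint on fun p : Σ i, κ i => V p.1 p.2) := by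
  rintro ⟨i, k⟩ ⟨j, l⟩ hne
  obtain rfl | hij := eq_or_ne i j
  · exact hV i fun hkl => hne (congrArg (Sigma.mk i) hkl)
  · exact (hO hij).mono (hVO i k) (hVO j l)

theorem compl_iUnion_eq_compl_iUnion_union_iUnion_sdiff {α ι : Type*} {T O : ι → Set α}
    (hO : Pairwise (Disjoint on O)) (hTO : ∀ i, T i ⊆ O i) :
    (⋃ i, T i)ᶜ = (⋃ i, O i)ᶜ ∪ ⋃ i, O i \ T i := by
  ext x
  simp only [mem_compl_iff, mem_union, mem_iUnion, mem_sdiff, not_exists]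
  constructor
  · intro hx
    by_cases hO' : ∃ i, x ∈ O i
    · obtain ⟨i, hi⟩ := hO'
      exact Or.inr ⟨i, hi, hx i⟩
    · exact Or.inl (not_exists.1 hO')
  · rintro (hx | ⟨i, hxO, hxT⟩) j hxj
    · exact hx j (hTO j hxj)
    · obtain rfl : j = i := by
        by_contra hji
        exact Set.disjoint_left.1 (hO hji) (hTO j hxj) hxO
      exact hxT hxj

theorem IsClopen.inter_mem_union_compl {X : Type*} [TopologicalSpace X] {𝒜 : Set (Set X)}
    (h𝒜 : ∀ A ∈ 𝒜, ∀ V, IsClopen V → A ∪ V ∈ 𝒜 ∧ A ∩ V ∈ 𝒜) {V : Set X} (hV : IsClopen V)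
    {T : Set X} (hT : T ∈ 𝒜 ∪ Compl.compl ⁻¹' 𝒜) : T ∩ V ∈ 𝒜 ∪ Compl.compl ⁻¹' 𝒜 := by
  rcases hT with hT | hT
  · exact Or.inl (h𝒜 T hT V hV).2
  · refine Or.inr ?_
    rw [mem_preimage, compl_inter]
    exact (h𝒜 _ hT _ hV.compl).1

section FineHierarchy

variable {C : Type}

theorem fineLambda_zero : FineLambda C 0 = ∅ := by
  rw [FineLambda, if_neg zero_ne_one, if_neg (not_lt.2 zero_le_one)]

theorem mem_fineLambda_one {S : Set (ℕ → C)} : S ∈ FineLambda C 1 ↔ IsOpen S := by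
  rw [FineLambda, if_pos rfl, mem_ofPred_eq]

theorem mem_fineK {θ : Ordinal} {S : Set (ℕ → C)} : S ∈ FineK C θ ↔ Sᶜ ∈ FineLambda C θ := Iff.rfl

theorem mem_fineLambda_iff_of_one_lt {θ : Ordinal} (hθ : 1 < θ) {S : Set (ℕ → C)} :
    S ∈ FineLambda C θ ↔ ∃ (I : Type) (T O : I → Set (ℕ → C)) (η : I → Ordinal),
      (∀ i, η i < θ) ∧ (∀ i, IsOpen (O i)) ∧ Pairwise (Disjoint on O) ∧ (∀ i, T i ⊆ O i) ∧
      S = ⋃ i, T i ∧ ∀ i, T i ∈ FineLambda C (η i) ∪ FineK C (η i) := by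
  rw [FineLambda, if_neg hθ.ne', if_pos hθ]
  constructor
  · rintro ⟨I, T, O, η, hO, hdisj, hTO, rfl, hT⟩
    exact ⟨I, T, O, fun i => η i, fun i => (η i).2, hO, hdisj, hTO, rfl, hT⟩
  · rintro ⟨I, T, O, η, hη, hO, hdisj, hTO, rfl, hT⟩
    exact ⟨I, T, O, fun i => ⟨η i, hη i⟩, hO, hdisj, hTO, rfl, hT⟩

theorem compl_mem_fineLambda_union_fineK {η : Ordinal} {T : Set (ℕ → C)}
    (hT : T ∈ FineLambda C η ∪ FineK C η) : Tᶜ ∈ FineLambda C η ∪ FineK C η := by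
  rcases hT with hT | hT
  · exact Or.inr (by rwa [mem_fineK, compl_compl])
  · exact Or.inl hT

section ClopenStep

variable {η : Ordinal} (hη : 1 < η)
  (hpieces : ∀ ζ < η, ∀ T ∈ FineLambda C ζ ∪ FineK C ζ, ∀ V, IsClopen V →
    T ∩ V ∈ FineLambda C ζ ∪ FineK C ζ)
include hη hpieces

theorem union_isClopen_mem_fineLambda_of_one_lt {A : Set (ℕ → C)} (hA : A ∈ FineLambda C η)
    {V : Set (ℕ → C)} (hV : IsClopen V) : A ∪ V ∈ FineLambda C η := by
  obtain ⟨I, T, O, ζ, hζ, hO, hdisj, hTO, rfl, hT⟩ := (mem_fineLambda_iff_of_one_lt hη).1 hA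
  refine (mem_fineLambda_iff_of_one_lt hη).2 ⟨Option I, fun o => o.elim V fun i => T i ∩ Vᶜ,
    fun o => o.elim V fun i => O i ∩ Vᶜ, fun o => o.elim 1 ζ, ?_, ?_, ?_, ?_, ?_, ?_⟩
  · rintro (_ | i)
    exacts [hη, hζ i]
  · rintro (_ | i)
    exacts [hV.isOpen, (hO i).inter hV.compl.isOpen]
  · rintro (_ | i) (_ | j) hne
    · exact absurd rfl hne
    · exact disjoint_compl_right.mono_right inter_subset_right
    · exact disjoint_compl_left.mono_left inter_subset_right
    · exact (hdisj fun h => hne (congrArg some h)).mono inter_subset_left inter_subset_left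
  · rintro (_ | i)
    exacts [subset_rfl, inter_subset_inter_left _ (hTO i)]
  · ext x
    simp only [mem_union, mem_iUnion, Option.exists, Option.elim, mem_inter_iff, mem_compl_iff]
    by_cases hx : x ∈ V <;> simp [hx]
  · rintro (_ | i)
    · exact Or.inl (mem_fineLambda_one.2 hV.isOpen)
    · exact hpieces _ (hζ i) _ (hT i) _ hV.compl

theorem inter_isClopen_mem_fineLambda_of_one_lt {A : Set (ℕ → C)} (hA : A ∈ FineLambda C η)
    {V : Set (ℕ → C)} (hV : IsClopen V) : A ∩ V ∈ FineLambda C η := by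
  obtain ⟨I, T, O, ζ, hζ, hO, hdisj, hTO, rfl, hT⟩ := (mem_fineLambda_iff_of_one_lt hη).1 hA
  exact (mem_fineLambda_iff_of_one_lt hη).2 ⟨I, fun i => T i ∩ V, O, ζ, hζ, hO, hdisj,
    fun i => inter_subset_left.trans (hTO i), iUnion_inter V T,
    fun i => hpieces _ (hζ i) _ (hT i) _ hV⟩

end ClopenStep

theorem union_mem_and_inter_mem_fineLambda_of_isClopen (η : Ordinal) :
    ∀ A ∈ FineLambda C η, ∀ V, IsClopen V → A ∪ V ∈ FineLambda C η ∧ A ∩ V ∈ FineLambda C η := by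
  induction η using WellFoundedLT.induction with
  | _ η ih =>
  have hpieces : ∀ ζ < η, ∀ T ∈ FineLambda C ζ ∪ FineK C ζ, ∀ V, IsClopen V →
      T ∩ V ∈ FineLambda C ζ ∪ FineK C ζ :=
    fun ζ hζ T hT V hV => hV.inter_mem_union_compl (ih ζ hζ) hT
  rcases lt_trichotomy η 1 with hη | rfl | hη
  · simp [Order.lt_one_iff.1 hη, fineLambda_zero]
  · simp only [mem_fineLambda_one]
    exact fun A hA V hV => ⟨hA.union hV.isOpen, hA.inter hV.isOpen⟩
  · exact fun A hA V hV => ⟨union_isClopen_mem_fineLambda_of_one_lt hη hpieces hA hV,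
      inter_isClopen_mem_fineLambda_of_one_lt hη hpieces hA hV⟩

theorem inter_isClopen_mem_fineLambda_union_fineK {η : Ordinal} {T V : Set (ℕ → C)}
    (hT : T ∈ FineLambda C η ∪ FineK C η) (hV : IsClopen V) :
    T ∩ V ∈ FineLambda C η ∪ FineK C η :=
  hV.inter_mem_union_compl (union_mem_and_inter_mem_fineLambda_of_isClopen η) hT

theorem exists_isClopen_open_union_of_mem_fineLambda {θ : Ordinal} (hθ : 1 < θ)
    {S : Set (ℕ → C)} (hS : S ∈ FineLambda C θ) :
    ∃ (I : Type) (T O : I → Set (ℕ → C)) (η : I → Ordinal),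
      (∀ i, η i < θ) ∧ (∀ i, IsClopen (O i)) ∧ Pairwise (Disjoint on O) ∧ (∀ i, T i ⊆ O i) ∧
      S = ⋃ i, T i ∧ ∀ i, T i ∈ FineLambda C (η i) ∪ FineK C (η i) := by
  obtain ⟨I, T, O, η, hη, hO, hdisj, hTO, rfl, hT⟩ := (mem_fineLambda_iff_of_one_lt hθ).1 hS
  have hpartition (i : I) : ∃ P : Set (Set (ℕ → C)),
      (∀ s ∈ P, IsClopen s) ∧ P.PairwiseDisjoint id ∧ ⋃₀ P = O i :=
    letI : TopologicalSpace C := ⊥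
    haveI : DiscreteTopology C := ⟨rfl⟩
    PiNat.exists_isClopen_partition (hO i)
  choose P hPclopen hPdisj hPO using hpartition
  refine ⟨Σ i, P i, fun p => T p.1 ∩ p.2, fun p => p.2, fun p => η p.1, fun p => hη p.1,
    fun p => hPclopen p.1 _ p.2.2, ?_, fun p => inter_subset_right, ?_,
    fun p => inter_isClopen_mem_fineLambda_union_fineK (hT p.1) (hPclopen p.1 _ p.2.2)⟩
  · exact hdisj.disjoint_sigma (fun i => (pairwise_subtype_iff_pairwise_set _ _).2 (hPdisj i))
      fun i s => hPO i ▸ subset_sUnion_of_mem s.2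
  · rw [iUnion_sigma]
    refine iUnion_congr fun i => ?_
    change T i = ⋃ s : P i, T i ∩ s
    rw [← inter_iUnion, ← sUnion_eq_iUnion, hPO i, inter_eq_left.2 (hTO i)]

end FineHierarchy

theorem statement18_general (C : Type) (θ : Ordinal) (S : Set (ℕ → C))
    (hS : S ∈ FineK C θ) :
    ∃ (F L : Set (ℕ → C)), IsClosed[seqTop C] F ∧ L ∈ FineLambda C θ ∧ S = F ∪ L := by
  rcases lt_trichotomy θ 1 with hθ0 | rfl | hθ1
  · rw [Order.lt_one_iff.1 hθ0, mem_fineK, fineLambda_zero] at hS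
    exact absurd hS (notMem_empty _)
  · exact ⟨S, ∅, isOpen_compl_iff.1 (mem_fineLambda_one.1 hS), mem_fineLambda_one.2 isOpen_empty,
      (union_empty S).symm⟩
  obtain ⟨I, T, O, η, hη, hO, hdisj, hTO, hST, hT⟩ :=
    exists_isClopen_open_union_of_mem_fineLambda hθ1 hS
  refine ⟨(⋃ i, O i)ᶜ, ⋃ i, O i \ T i, (isOpen_iUnion fun i => (hO i).isOpen).isClosed_compl,
    (mem_fineLambda_iff_of_one_lt hθ1).2 ⟨I, fun i => O i \ T i, O, η, hη,
      fun i => (hO i).isOpen, hdisj, fun i => sdiff_subset, rfl, fun i => ?_⟩, ?_⟩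
  · change O i \ T i ∈ _
    rw [sdiff_eq, inter_comm]
    exact inter_isClopen_mem_fineLambda_union_fineK (compl_mem_fineLambda_union_fineK (hT i)) (hO i)
  · rw [← compl_compl S, hST]
    exact compl_iUnion_eq_compl_iUnion_union_iUnion_sdiff hdisj hTO

/-- Every set in `K_θ` is the union of a closed set and a set in `Λ_θ`. -/
theorem statement18 (C : Type) (θ : Ordinal) (hθ : θ ≠ 0) (S : Set (ℕ → C))
    (hS : S ∈ FineK C θ) :
    ∃ (F L : Set (ℕ → C)), IsClosed[seqTop C] F ∧ L ∈ FineLambda C θ ∧ S = F ∪ L :=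
  statement18_general C θ S hS

end
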